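/- arXiv:2305.01792 — 2 statements merged into one kernel-verified Lean document; each statement's English description precedes it below -/
import Mathlib

section
/- Let θ ∈ (0, 1/2], let n ≥ 1 be an integer, let y ∈ S_{T[θ,S_n]} with basis expansion y = Σ_{i=1}^∞ b_i e_i, and let j be a positive integer. Define sgn(t) = 1 if t ≥ 0 and sgn(t) = −1 if t < 0. Then the vector z = Σ_{i≠j} (1 − θ) b_i e_i + (b_j + sgn(b_j)) e_j satisfies ‖z‖ = 1 + |b_j|. -/
open scoped BigOperators

noncomputable section

/-- Projection of a finitely supported vector onto the coordinates in `E`. -/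
def tsProj (E : Finset ℕ+) (x : ℕ+ →₀ ℝ) : ℕ+ →₀ ℝ :=
  x.filter fun i => i ∈ E

/-- The Schreier families `S_n` on the positive integers:
`S₁` consists of the sets `F` with `|F| ≤ min F` (together with `∅`), and `S_{n+1}`
consists of unions `F₁ ∪ ⋯ ∪ F_d` of nonempty members `F₁ < ⋯ < F_d` of `S_n`
with `d ≤ min F₁` (together with `∅`). -/
def Schreier : ℕ → Set (Finset ℕ+)
  | 0 => {F | F.card ≤ 1}
  | 1 => {F | ∀ a ∈ F, F.card ≤ (a : ℕ)}
  | n + 2 =>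
      {F | F = ∅ ∨
        ∃ (d : ℕ) (G : Fin d → Finset ℕ+),
          0 < d ∧ (∀ i, G i ∈ Schreier (n + 1)) ∧ (∀ i, (G i).Nonempty) ∧
          (∀ i j : Fin d, i < j → ∀ a ∈ G i, ∀ b ∈ G j, a < b) ∧
          (∀ i, ∀ a ∈ G i, d ≤ (a : ℕ)) ∧ F = Finset.univ.biUnion G}

/-- A tuple of nonempty finite sets `E 0 < E 1 < ⋯` whose set of minima belongs to `S`. -/
def TsAdmissible (S : Set (Finset ℕ+)) {d : ℕ} (E : Fin d → Finset ℕ+) : Prop :=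
  (∀ i, (E i).Nonempty) ∧
  (∀ i j : Fin d, i < j → ∀ a ∈ E i, ∀ b ∈ E j, a < b) ∧
  ∃ μ : Fin d → ℕ+, (∀ i, IsLeast (↑(E i) : Set ℕ+) (μ i)) ∧
    Finset.univ.image μ ∈ S

/-- The iterated norms `‖·‖_m` in the construction of the Tsirelson norm:
`‖x‖₀` is the supremum norm and
`‖x‖_{m+1} = max(‖x‖_m, sup{θ ∑ᵢ ‖Eᵢ x‖_m : E₁ < ⋯ < E_d, {min Eᵢ} ∈ S})`. -/
def tnormAux (θ : ℝ) (S : Set (Finset ℕ+)) : ℕ → (ℕ+ →₀ ℝ) → ℝ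
  | 0, x => ⨆ i, |x i|
  | m + 1, x =>
      max (tnormAux θ S m x)
        (sSup {r : ℝ | ∃ (d : ℕ) (E : Fin d → Finset ℕ+), TsAdmissible S E ∧
          r = θ * ∑ i, tnormAux θ S m (tsProj (E i) x)})

/-- The Tsirelson norm `‖x‖_{θ,S} = sup_m ‖x‖_m` on `c₀₀`. -/
def tnorm (θ : ℝ) (S : Set (Finset ℕ+)) (x : ℕ+ →₀ ℝ) : ℝ :=
  ⨆ m : ℕ, tnormAux θ S m x

/-- `X`, together with the sequence `e` of unit vectors, is (a realization of) the
Tsirelson space `T[θ, S_n]`: a Banach space containing `c₀₀` isometrically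
(w.r.t. the Tsirelson norm) as a dense subspace, in which `(e i)` is a
(1-unconditional) basis, i.e. every `x` has a unique expansion `x = ∑ᵢ aᵢ eᵢ`. -/
structure IsTsirelsonSpace (θ : ℝ) (n : ℕ) (X : Type*) [NormedAddCommGroup X]
    [NormedSpace ℝ X] (e : ℕ+ → X) : Prop where
  complete : CompleteSpace X
  norm_embed : ∀ a : ℕ+ →₀ ℝ, ‖a.sum fun i c => c • e i‖ = tnorm θ (Schreier n) a
  dense_embed : DenseRange fun a : ℕ+ →₀ ℝ => a.sum fun i c => c • e i
  expansion : ∀ x : X, ∃! a : ℕ+ → ℝ, HasSum (fun i => a i • e i) x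

/-! The lower bound is read off the `j`-th coordinate, which the Tsirelson norm dominates.
For the upper bound, show by induction on `m` that `‖(1 - θ) a + c e_j‖_m ≤ A + |a_j|`
whenever `‖a‖ ≤ A`, `1 ≤ A` and `|c| ≤ θ |a_j| + 1`. At level `0` this is a coordinatewise
estimate. At level `m + 1`, the sets of an admissible family split `(1 - θ) a` into pieces of
total weight at most `(1 - θ) A`, while `c e_j` meets at most one of them and adds at most
`θ |c| ≤ θ² |a_j| + θ`. Apply this to the finite truncations of `y` and pass to the limit. -/

open Filter Topology

def l1Norm (x : ℕ+ →₀ ℝ) : ℝ := ∑ i ∈ x.support, |x i|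

lemma l1Norm_nonneg (x : ℕ+ →₀ ℝ) : 0 ≤ l1Norm x :=
  Finset.sum_nonneg fun _ _ => abs_nonneg _

lemma abs_apply_le_l1Norm (x : ℕ+ →₀ ℝ) (i : ℕ+) : |x i| ≤ l1Norm x := by
  by_cases h : i ∈ x.support
  · exact Finset.single_le_sum (f := fun k => |x k|) (fun _ _ => abs_nonneg _) h
  · rw [Finsupp.notMem_support_iff.mp h, abs_zero]
    exact l1Norm_nonneg x

lemma l1Norm_single (j : ℕ+) (c : ℝ) : l1Norm (Finsupp.single j c) = |c| := by
  by_cases h : c = 0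
  · simp [l1Norm, h]
  · simp [l1Norm, Finsupp.support_single _ h]

lemma tsProj_add (E : Finset ℕ+) (x y : ℕ+ →₀ ℝ) :
    tsProj E (x + y) = tsProj E x + tsProj E y :=
  Finsupp.filter_add

lemma tsProj_smul (E : Finset ℕ+) (c : ℝ) (x : ℕ+ →₀ ℝ) : tsProj E (c • x) = c • tsProj E x :=
  Finsupp.filter_smul

lemma l1Norm_tsProj (E : Finset ℕ+) (x : ℕ+ →₀ ℝ) :
    l1Norm (tsProj E x) = ∑ i ∈ x.support ∩ E, |x i| := by
  rw [l1Norm, tsProj, Finsupp.support_filter, Finset.filter_mem_eq_inter]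
  exact Finset.sum_congr rfl fun i hi =>
    by rw [Finsupp.filter_apply_pos _ _ (Finset.mem_inter.mp hi).2]

lemma sum_l1Norm_tsProj_le {ι : Type*} {s : Finset ι} {E : ι → Finset ℕ+}
    (hE : (s : Set ι).PairwiseDisjoint E) (x : ℕ+ →₀ ℝ) :
    ∑ i ∈ s, l1Norm (tsProj (E i) x) ≤ l1Norm x := by
  have hdisj : (s : Set ι).PairwiseDisjoint fun i => x.support ∩ E i :=
    hE.mono fun _ => Finset.inter_subset_right
  calc ∑ i ∈ s, l1Norm (tsProj (E i) x)
      = ∑ k ∈ s.biUnion fun i => x.support ∩ E i, |x k| := by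
        simp only [Finset.sum_biUnion hdisj, l1Norm_tsProj]
    _ ≤ l1Norm x :=
        Finset.sum_le_sum_of_subset_of_nonneg
          (Finset.biUnion_subset.mpr fun _ _ => Finset.inter_subset_left)
          fun _ _ _ => abs_nonneg _

lemma TsAdmissible.pairwiseDisjoint {S : Set (Finset ℕ+)} {d : ℕ} {E : Fin d → Finset ℕ+}
    (hE : TsAdmissible S E) : (Set.univ : Set (Fin d)).PairwiseDisjoint E := by
  intro i _ i' _ hne
  refine Finset.disjoint_left.mpr fun k hk hk' => ?_
  rcases lt_or_gt_of_ne hne with h | h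
  · exact lt_irrefl k (hE.2.1 i i' h k hk k hk')
  · exact lt_irrefl k (hE.2.1 i' i h k hk' k hk)

section NormAux

variable {θ : ℝ} {S : Set (Finset ℕ+)}

lemma tnormAux_nonneg : ∀ (m : ℕ) (x : ℕ+ →₀ ℝ), 0 ≤ tnormAux θ S m x
  | 0, _ => Real.iSup_nonneg fun _ => abs_nonneg _
  | m + 1, x => (tnormAux_nonneg m x).trans (le_max_left _ _)

lemma abs_apply_le_tnormAux_zero (x : ℕ+ →₀ ℝ) (i : ℕ+) : |x i| ≤ tnormAux θ S 0 x :=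
  le_ciSup (f := fun i => |x i|) ⟨l1Norm x, by rintro _ ⟨i, rfl⟩; exact abs_apply_le_l1Norm x i⟩ i

variable (hθ0 : 0 ≤ θ) (hθ1 : θ ≤ 1)
include hθ0 hθ1

lemma mul_sum_tnormAux_tsProj_le_l1Norm {m : ℕ} (hm : ∀ x, tnormAux θ S m x ≤ l1Norm x)
    {d : ℕ} {E : Fin d → Finset ℕ+} (hE : TsAdmissible S E) (x : ℕ+ →₀ ℝ) :
    θ * ∑ i, tnormAux θ S m (tsProj (E i) x) ≤ l1Norm x :=
  calc θ * ∑ i, tnormAux θ S m (tsProj (E i) x)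
      ≤ θ * ∑ i, l1Norm (tsProj (E i) x) := by gcongr with i; exact hm _
    _ ≤ θ * l1Norm x := by
        gcongr
        exact sum_l1Norm_tsProj_le (hE.pairwiseDisjoint.subset (Set.subset_univ _)) x
    _ ≤ l1Norm x := mul_le_of_le_one_left (l1Norm_nonneg x) hθ1

lemma tnormAux_le_l1Norm : ∀ (m : ℕ) (x : ℕ+ →₀ ℝ), tnormAux θ S m x ≤ l1Norm x
  | 0, x => Real.iSup_le (abs_apply_le_l1Norm x) (l1Norm_nonneg x)
  | m + 1, x => max_le (tnormAux_le_l1Norm m x) <| Real.sSup_le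
      (by rintro _ ⟨d, E, hE, rfl⟩
          exact mul_sum_tnormAux_tsProj_le_l1Norm hθ0 hθ1 (tnormAux_le_l1Norm m) hE x)
      (l1Norm_nonneg x)

lemma mul_sum_tnormAux_tsProj_le_succ {d : ℕ} {E : Fin d → Finset ℕ+} (hE : TsAdmissible S E)
    (m : ℕ) (x : ℕ+ →₀ ℝ) :
    θ * ∑ i, tnormAux θ S m (tsProj (E i) x) ≤ tnormAux θ S (m + 1) x := by
  have hbdd : BddAbove {r : ℝ | ∃ (d : ℕ) (E : Fin d → Finset ℕ+), TsAdmissible S E ∧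
      r = θ * ∑ i, tnormAux θ S m (tsProj (E i) x)} := by
    refine ⟨l1Norm x, ?_⟩
    rintro _ ⟨d', E', hE', rfl⟩
    exact mul_sum_tnormAux_tsProj_le_l1Norm hθ0 hθ1 (tnormAux_le_l1Norm hθ0 hθ1 m) hE' x
  exact (le_csSup hbdd ⟨d, E, hE, rfl⟩).trans (le_max_right _ _)

lemma tnormAux_add_le : ∀ (m : ℕ) (x y : ℕ+ →₀ ℝ),
    tnormAux θ S m (x + y) ≤ tnormAux θ S m x + tnormAux θ S m y
  | 0, x, y => Real.iSup_le
      (fun i => (abs_add_le (x i) (y i)).trans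
        (add_le_add (abs_apply_le_tnormAux_zero x i) (abs_apply_le_tnormAux_zero y i)))
      (add_nonneg (tnormAux_nonneg 0 x) (tnormAux_nonneg 0 y))
  | m + 1, x, y => by
    refine max_le ((tnormAux_add_le m x y).trans (add_le_add (le_max_left _ _) (le_max_left _ _)))
      (Real.sSup_le ?_ (add_nonneg (tnormAux_nonneg _ x) (tnormAux_nonneg _ y)))
    rintro _ ⟨d, E, hE, rfl⟩
    calc θ * ∑ i, tnormAux θ S m (tsProj (E i) (x + y))
        ≤ θ * ∑ i, (tnormAux θ S m (tsProj (E i) x) + tnormAux θ S m (tsProj (E i) y)) := by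
          gcongr with i
          rw [tsProj_add]
          exact tnormAux_add_le m _ _
      _ = θ * ∑ i, tnormAux θ S m (tsProj (E i) x) + θ * ∑ i, tnormAux θ S m (tsProj (E i) y) := by
          rw [Finset.sum_add_distrib, mul_add]
      _ ≤ tnormAux θ S (m + 1) x + tnormAux θ S (m + 1) y :=
          add_le_add (mul_sum_tnormAux_tsProj_le_succ hθ0 hθ1 hE m x)
            (mul_sum_tnormAux_tsProj_le_succ hθ0 hθ1 hE m y)

lemma tnormAux_smul_le {c : ℝ} (hc : 0 ≤ c) : ∀ (m : ℕ) (x : ℕ+ →₀ ℝ),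
    tnormAux θ S m (c • x) ≤ c * tnormAux θ S m x
  | 0, x => Real.iSup_le
      (fun i => by
        rw [Finsupp.smul_apply, smul_eq_mul, abs_mul, abs_of_nonneg hc]
        exact mul_le_mul_of_nonneg_left (abs_apply_le_tnormAux_zero x i) hc)
      (mul_nonneg hc (tnormAux_nonneg 0 x))
  | m + 1, x => by
    refine max_le ((tnormAux_smul_le hc m x).trans (by gcongr; exact le_max_left _ _))
      (Real.sSup_le ?_ (mul_nonneg hc (tnormAux_nonneg _ x)))
    rintro _ ⟨d, E, hE, rfl⟩
    calc θ * ∑ i, tnormAux θ S m (tsProj (E i) (c • x))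
        ≤ θ * ∑ i, c * tnormAux θ S m (tsProj (E i) x) := by
          gcongr with i
          rw [tsProj_smul]
          exact tnormAux_smul_le hc m _
      _ = c * (θ * ∑ i, tnormAux θ S m (tsProj (E i) x)) := by
          rw [← Finset.mul_sum]; ring
      _ ≤ c * tnormAux θ S (m + 1) x := by
          gcongr; exact mul_sum_tnormAux_tsProj_le_succ hθ0 hθ1 hE m x

lemma mul_sum_tnormAux_tsProj_add_le {d : ℕ} {E : Fin d → Finset ℕ+} (hE : TsAdmissible S E)
    (m : ℕ) (x y : ℕ+ →₀ ℝ) :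
    θ * ∑ i, tnormAux θ S m (tsProj (E i) (x + y)) ≤ tnormAux θ S (m + 1) x + θ * l1Norm y :=
  calc θ * ∑ i, tnormAux θ S m (tsProj (E i) (x + y))
      ≤ θ * ∑ i, (tnormAux θ S m (tsProj (E i) x) + l1Norm (tsProj (E i) y)) := by
        gcongr with i
        rw [tsProj_add]
        exact (tnormAux_add_le hθ0 hθ1 m _ _).trans
          (add_le_add le_rfl (tnormAux_le_l1Norm hθ0 hθ1 m _))
    _ = θ * ∑ i, tnormAux θ S m (tsProj (E i) x) + θ * ∑ i, l1Norm (tsProj (E i) y) := by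
        rw [Finset.sum_add_distrib, mul_add]
    _ ≤ tnormAux θ S (m + 1) x + θ * l1Norm y := by
        gcongr
        · exact mul_sum_tnormAux_tsProj_le_succ hθ0 hθ1 hE m x
        · exact sum_l1Norm_tsProj_le (hE.pairwiseDisjoint.subset (Set.subset_univ _)) y

lemma tnormAux_smul_add_single_le {a : ℕ+ →₀ ℝ} {A c : ℝ} {j : ℕ+} (hA : 1 ≤ A)
    (ha : ∀ m, tnormAux θ S m a ≤ A) (hc : |c| ≤ θ * |a j| + 1) :
    ∀ m, tnormAux θ S m ((1 - θ) • a + Finsupp.single j c) ≤ A + |a j|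
  | 0 => by
    refine Real.iSup_le (fun i => ?_) (by positivity)
    have hai : |a i| ≤ A := (abs_apply_le_tnormAux_zero a i).trans (ha 0)
    rw [Finsupp.add_apply, Finsupp.smul_apply, smul_eq_mul, Finsupp.single_apply]
    split_ifs with hji
    · subst hji
      calc |(1 - θ) * a j + c| ≤ (1 - θ) * |a j| + |c| := by
            exact (abs_add_le _ _).trans_eq (by rw [abs_mul, abs_of_nonneg (sub_nonneg.mpr hθ1)])
        _ ≤ A + |a j| := by nlinarith
    · rw [add_zero, abs_mul, abs_of_nonneg (sub_nonneg.mpr hθ1)]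
      nlinarith [abs_nonneg (a i), abs_nonneg (a j)]
  | m + 1 => by
    refine max_le (tnormAux_smul_add_single_le hA ha hc m) (Real.sSup_le ?_ (by positivity))
    rintro _ ⟨d, E, hE, rfl⟩
    calc θ * ∑ i, tnormAux θ S m (tsProj (E i) ((1 - θ) • a + Finsupp.single j c))
        ≤ tnormAux θ S (m + 1) ((1 - θ) • a) + θ * l1Norm (Finsupp.single j c) :=
          mul_sum_tnormAux_tsProj_add_le hθ0 hθ1 hE m _ _
      _ ≤ (1 - θ) * A + θ * |c| := by
          rw [l1Norm_single]
          gcongr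
          exact (tnormAux_smul_le hθ0 hθ1 (sub_nonneg.mpr hθ1) _ a).trans
            (mul_le_mul_of_nonneg_left (ha _) (sub_nonneg.mpr hθ1))
      _ ≤ (1 - θ) * A + θ * (θ * |a j| + 1) := by gcongr
      _ ≤ A + |a j| := by
          have hθθ : θ * θ ≤ 1 := mul_le_one₀ hθ1 hθ0 hθ1
          nlinarith [abs_nonneg (a j), mul_le_mul_of_nonneg_right hθθ (abs_nonneg (a j))]

lemma tnormAux_le_tnorm (m : ℕ) (x : ℕ+ →₀ ℝ) : tnormAux θ S m x ≤ tnorm θ S x :=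
  le_ciSup (f := fun m => tnormAux θ S m x)
    ⟨l1Norm x, by rintro _ ⟨m, rfl⟩; exact tnormAux_le_l1Norm hθ0 hθ1 m x⟩ m

lemma abs_apply_le_tnorm (x : ℕ+ →₀ ℝ) (i : ℕ+) : |x i| ≤ tnorm θ S x :=
  (abs_apply_le_tnormAux_zero x i).trans (tnormAux_le_tnorm hθ0 hθ1 0 x)

lemma tnorm_smul_add_single_le {a : ℕ+ →₀ ℝ} {A c : ℝ} {j : ℕ+} (hA : 1 ≤ A)
    (ha : tnorm θ S a ≤ A) (hc : |c| ≤ θ * |a j| + 1) :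
    tnorm θ S ((1 - θ) • a + Finsupp.single j c) ≤ A + |a j| :=
  Real.iSup_le
    (tnormAux_smul_add_single_le hθ0 hθ1 hA (fun m => (tnormAux_le_tnorm hθ0 hθ1 m a).trans ha) hc)
    (by positivity)

end NormAux

lemma indicator_ite_eq_smul_add_single {F : Finset ℕ+} {j : ℕ+} (hj : j ∈ F) (f : ℕ+ → ℝ)
    (t u : ℝ) :
    (Finsupp.indicator F fun i _ => if i = j then u else t * f i) =
      t • Finsupp.indicator F (fun i _ => f i) + Finsupp.single j (u - t * f j) := by
  ext i
  by_cases hi : i ∈ F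
  · by_cases hij : i = j
    · subst hij; simp [Finsupp.indicator_of_mem hi]
    · simp [Finsupp.indicator_of_mem hi, hij]
  · have hij : i ≠ j := fun h => hi (h ▸ hj)
    simp [Finsupp.indicator_of_notMem hi, Ne.symm hij]

lemma hasSum_ite_smul {M : Type*} [AddCommMonoid M] [TopologicalSpace M] [Module ℝ M]
    [ContinuousConstSMul ℝ M] [ContinuousAdd M] {f : ℕ+ → ℝ} {e : ℕ+ → M} {y : M}
    (hy : HasSum (fun i => f i • e i) y) (j : ℕ+) (t u : ℝ) :
    HasSum (fun i => (if i = j then u else t * f i) • e i) (t • y + (u - t * f j) • e j) := by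
  convert (hy.const_smul t).add (hasSum_ite_eq j ((u - t * f j) • e j)) using 1
  funext i
  split_ifs with hij
  · subst hij; rw [smul_smul, ← add_smul]; congr 1; ring
  · rw [smul_smul, add_zero]

section Space

variable {θ : ℝ} {n : ℕ} {X : Type*} [NormedAddCommGroup X] [NormedSpace ℝ X] {e : ℕ+ → X}

lemma IsTsirelsonSpace.norm_sum_smul (hX : IsTsirelsonSpace θ n X e) (F : Finset ℕ+)
    (f : ℕ+ → ℝ) :
    ‖∑ i ∈ F, f i • e i‖ = tnorm θ (Schreier n) (Finsupp.indicator F fun i _ => f i) := by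
  rw [← hX.norm_embed, Finsupp.sum_of_support_subset _ (Finsupp.support_indicator_subset F _) _
    fun i _ => zero_smul ℝ (e i)]
  exact congrArg norm (Finset.sum_congr rfl fun i hi => by rw [Finsupp.indicator_of_mem hi])

lemma IsTsirelsonSpace.tendsto_tnorm_indicator (hX : IsTsirelsonSpace θ n X e) {f : ℕ+ → ℝ}
    {x : X} (hx : HasSum (fun i => f i • e i) x) :
    Tendsto (fun F : Finset ℕ+ => tnorm θ (Schreier n) (Finsupp.indicator F fun i _ => f i))
      atTop (𝓝 ‖x‖) := by
  have h : Tendsto (fun F : Finset ℕ+ => ∑ i ∈ F, f i • e i) atTop (𝓝 x) := hx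
  simpa only [hX.norm_sum_smul] using h.norm

lemma IsTsirelsonSpace.abs_le_norm (hX : IsTsirelsonSpace θ n X e) (hθ0 : 0 ≤ θ) (hθ1 : θ ≤ 1)
    {f : ℕ+ → ℝ} {x : X} (hx : HasSum (fun i => f i • e i) x) (j : ℕ+) : |f j| ≤ ‖x‖ := by
  refine ge_of_tendsto (hX.tendsto_tnorm_indicator hx) ?_
  filter_upwards [eventually_ge_atTop {j}] with F hF
  have hjF : j ∈ F := hF (Finset.mem_singleton_self j)
  have h := abs_apply_le_tnorm (S := Schreier n) hθ0 hθ1 (Finsupp.indicator F fun i _ => f i) j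
  rwa [Finsupp.indicator_of_mem hjF] at h

end Space

lemma abs_add_sign (t : ℝ) : |t + (if 0 ≤ t then 1 else -1)| = 1 + |t| := by
  split_ifs with h
  · rw [abs_of_nonneg h, abs_of_nonneg (by linarith)]; ring
  · rw [abs_of_neg (not_le.mp h), abs_of_neg (by linarith)]; ring

theorem tsirelson_perturbation_norm_general
    (θ : ℝ) (hθ0 : 0 < θ) (hθ : θ ≤ 1 / 2) (n : ℕ)
    (X : Type*) [NormedAddCommGroup X] [NormedSpace ℝ X] (e : ℕ+ → X)
    (hX : IsTsirelsonSpace θ n X e)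
    (y : X) (hy : ‖y‖ = 1) (b : ℕ+ → ℝ) (hb : HasSum (fun i => b i • e i) y)
    (j : ℕ+) :
    ∃ z : X,
      HasSum
        (fun i => (if i = j then b j + (if 0 ≤ b j then (1 : ℝ) else -1)
          else (1 - θ) * b i) • e i) z ∧
      ‖z‖ = 1 + |b j| := by
  have hθ1 : θ ≤ 1 := by linarith
  set s : ℝ := if 0 ≤ b j then 1 else -1
  have hc : |b j + s - (1 - θ) * b j| ≤ θ * |b j| + 1 := by
    calc |b j + s - (1 - θ) * b j| = |θ * b j + s| := by congr 1; ring
      _ ≤ θ * |b j| + 1 := by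
        refine (abs_add_le _ _).trans (le_of_eq ?_)
        rw [abs_mul, abs_of_pos hθ0]
        simp only [s]; split_ifs <;> norm_num
  have hz := hasSum_ite_smul hb j (1 - θ) (b j + s)
  refine ⟨_, hz, le_antisymm ?_ ?_⟩
  · have hlim := (tendsto_const_nhds (x := (1 : ℝ)).max (hX.tendsto_tnorm_indicator hb)).add_const |b j|
    rw [hy, max_self] at hlim
    refine le_of_tendsto_of_tendsto (hX.tendsto_tnorm_indicator hz) hlim ?_
    filter_upwards [eventually_ge_atTop {j}] with F hF
    have hjF : j ∈ F := hF (Finset.mem_singleton_self j)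
    set bF : ℕ+ →₀ ℝ := Finsupp.indicator F fun i _ => b i
    have hbF : bF j = b j := Finsupp.indicator_of_mem hjF _
    calc _ = tnorm θ (Schreier n) ((1 - θ) • bF + Finsupp.single j (b j + s - (1 - θ) * b j)) := by
          rw [indicator_ite_eq_smul_add_single hjF]
      _ ≤ max 1 (tnorm θ (Schreier n) bF) + |bF j| :=
          tnorm_smul_add_single_le hθ0.le hθ1 (le_max_left _ _) (le_max_right _ _) (hbF ▸ hc)
      _ = _ := by rw [hbF]
  · have hsign : |b j + s| = 1 + |b j| := abs_add_sign (b j)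
    simpa only [if_pos, hsign] using hX.abs_le_norm hθ0.le hθ1 hz j

/-- If `y = ∑ᵢ bᵢ eᵢ` lies in the unit sphere of `T[θ, S_n]` and `j` is
a coordinate, then the vector `z = ∑_{i ≠ j} (1 − θ) bᵢ eᵢ + (b_j + sgn(b_j)) e_j`
has norm `1 + |b_j|` (where `sgn t = 1` if `t ≥ 0` and `sgn t = −1` if `t < 0`). -/
theorem tsirelson_perturbation_norm
    (θ : ℝ) (hθ0 : 0 < θ) (hθ : θ ≤ 1 / 2) (n : ℕ) (hn : 1 ≤ n)
    (X : Type*) [NormedAddCommGroup X] [NormedSpace ℝ X] (e : ℕ+ → X)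
    (hX : IsTsirelsonSpace θ n X e)
    (y : X) (hy : ‖y‖ = 1) (b : ℕ+ → ℝ) (hb : HasSum (fun i => b i • e i) y)
    (j : ℕ+) :
    ∃ z : X,
      HasSum
        (fun i => (if i = j then b j + (if 0 ≤ b j then (1 : ℝ) else -1)
          else (1 - θ) * b i) • e i) z ∧
      ‖z‖ = 1 + |b j| :=
  tsirelson_perturbation_norm_general θ hθ0 hθ n X e hX y hy b hb j
end
end

section
/- Let θ ∈ (0, 1/2] be such that θ⁻¹ is not an integer, let 1 ≤ i ≤ ⌈θ⁻¹⌉ − 1, and let j₁ < j₂ < ⋯ < j_{⌈θ⁻¹⌉−1} be positive integers with ⌈θ⁻¹⌉ < j₁. Then ‖ e_i − Σ_{k=1}^{⌈θ⁻¹⌉−1} e_{j_k} ‖_{θ,S₁} = 1. -/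
/-!
The vector `x = eᵢ - ∑ₖ e_{jₖ}` has sup norm `1`. By induction on `m`, `‖y‖_m ≤ 1` for every
`y` supported in `supp x` with entries in `[-1, 1]`, a class closed under the projections `E y`.
In an `S₁`-admissible family `E₁ < ⋯ < E_d` at most `N - 1` sets meet `supp x`, where
`N = ⌈θ⁻¹⌉`: trivially if `d ≤ N - 1`, and otherwise every `E_t` lies above `d > i`, so the
disjoint sets meeting `supp x` contain distinct `jₖ`. Each level thus gives at most
`θ (N - 1) < 1`.
-/

open scoped BigOperators

noncomputable section

open Finset

section

variable {α ι M : Type*} [Fintype ι] [AddCommMonoid M]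

theorem Finsupp.sum_single_apply_of_notMem_range {j : ι → α} {a : α} (ha : a ∉ Set.range j)
    (c : M) : (∑ k, Finsupp.single (j k) c) a = 0 := by
  rw [Finsupp.finsetSum_apply]
  exact sum_eq_zero fun k _ => Finsupp.single_eq_of_ne' fun h => ha ⟨k, h⟩

theorem Finsupp.sum_single_apply_self {j : ι → α} (hj : Function.Injective j) (k : ι) (c : M) :
    (∑ k', Finsupp.single (j k') c) (j k) = c := by
  rw [Finsupp.finsetSum_apply, sum_eq_single_of_mem k (mem_univ k) fun k' _ hk' =>
    Finsupp.single_eq_of_ne' fun h => hk' (hj h)]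
  exact Finsupp.single_eq_same

theorem Finsupp.support_single_sub_sum_single_subset [DecidableEq α] {G : Type*} [AddCommGroup G]
    (i : α) (j : ι → α) (c c' : G) :
    (Finsupp.single i c - ∑ k, Finsupp.single (j k) c').support ⊆ insert i (univ.image j) := by
  intro a ha
  rw [mem_insert, mem_image]
  by_contra! h
  refine Finsupp.mem_support_iff.1 ha ?_
  rw [Finsupp.sub_apply, sum_single_apply_of_notMem_range fun ⟨k, hk⟩ => h.2 k (mem_univ k) hk,
    Finsupp.single_eq_of_ne' h.1.symm, sub_zero]

theorem Finsupp.abs_single_sub_sum_single_apply_le_one {i : α} {j : ι → α}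
    (hj : Function.Injective j) (hi : i ∉ Set.range j) (a : α) :
    |(Finsupp.single i 1 - ∑ k, Finsupp.single (j k) 1 : α →₀ ℝ) a| ≤ 1 := by
  rw [Finsupp.sub_apply]
  by_cases ha : a ∈ Set.range j
  · obtain ⟨k, rfl⟩ := ha
    rw [sum_single_apply_self hj, Finsupp.single_eq_of_ne' fun h => hi ⟨k, h.symm⟩]
    norm_num
  · classical
    rw [sum_single_apply_of_notMem_range ha, sub_zero, Finsupp.single_apply]
    split_ifs <;> norm_num

end

theorem tsProj_apply (E : Finset ℕ+) (x : ℕ+ →₀ ℝ) (a : ℕ+) :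
    tsProj E x a = if a ∈ E then x a else 0 :=
  Finsupp.filter_apply _ _ _

theorem support_tsProj_subset (E : Finset ℕ+) (x : ℕ+ →₀ ℝ) :
    (tsProj E x).support ⊆ x.support := by
  rw [tsProj, Finsupp.support_filter]
  exact filter_subset _ _

theorem tsProj_eq_zero_of_disjoint {E : Finset ℕ+} {x : ℕ+ →₀ ℝ} (h : Disjoint E x.support) :
    tsProj E x = 0 := by
  ext a
  rw [tsProj_apply]
  split_ifs with ha
  · exact Finsupp.notMem_support_iff.1 (disjoint_left.1 h ha)
  · rfl

theorem abs_tsProj_apply_le (E : Finset ℕ+) (x : ℕ+ →₀ ℝ) (a : ℕ+) :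
    |tsProj E x a| ≤ |x a| := by
  rw [tsProj_apply]
  split_ifs <;> simp

theorem tnormAux_zero_right (θ : ℝ) (S : Set (Finset ℕ+)) (m : ℕ) :
    tnormAux θ S m 0 = 0 := by
  induction m with
  | zero => simp [tnormAux]
  | succ m ih =>
    rw [tnormAux, ih]
    refine max_eq_left (Real.sSup_le ?_ le_rfl)
    rintro r ⟨d, E, -, rfl⟩
    simp [tsProj_eq_zero_of_disjoint, ih]

namespace TsAdmissible

variable {S : Set (Finset ℕ+)} {d : ℕ} {E : Fin d → Finset ℕ+}

theorem pairwiseDisjoint_s19 (hE : TsAdmissible S E) (s : Finset (Fin d)) :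
    (s : Set (Fin d)).PairwiseDisjoint E := by
  intro t _ u _ htu
  refine disjoint_left.2 fun a hat hau => ?_
  rcases htu.lt_or_gt with h | h
  · exact (hE.2.1 t u h a hat a hau).false
  · exact (hE.2.1 u t h a hau a hat).false

theorem le_of_mem_of_schreier_one (hE : TsAdmissible (Schreier 1) E) {t : Fin d} {a : ℕ+}
    (ha : a ∈ E t) : d ≤ a := by
  obtain ⟨-, hord, μ, hμ, hS⟩ := hE
  have hμ_mono : StrictMono μ := fun t u h => hord t u h _ (hμ t).1 _ (hμ u).1
  have hcard : #(univ.image μ) = d := by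
    rw [card_image_of_injective _ hμ_mono.injective, card_univ, Fintype.card_fin]
  calc d = #(univ.image μ) := hcard.symm
    _ ≤ μ t := hS _ (mem_image_of_mem μ (mem_univ t))
    _ ≤ a := by exact_mod_cast (hμ t).2 ha

theorem card_filter_inter_nonempty_le (hE : TsAdmissible (Schreier 1) E) {A : Finset ℕ+}
    {n : ℕ} (hA : #(A.filter fun a : ℕ+ => n < (a : ℕ)) ≤ n) : #{t | (E t ∩ A).Nonempty} ≤ n := by
  by_cases hd : d ≤ n
  · exact (card_filter_le _ _).trans (by simpa using hd)
  set T : Finset (Fin d) := {t | (E t ∩ A).Nonempty}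
  have hsub : T.biUnion (fun t => E t ∩ A) ⊆ A.filter fun a : ℕ+ => n < (a : ℕ) := by
    intro a ha
    obtain ⟨t, -, hat⟩ := mem_biUnion.1 ha
    have := hE.le_of_mem_of_schreier_one (mem_inter.1 hat).1
    exact mem_filter.2 ⟨(mem_inter.1 hat).2, by omega⟩
  calc #T ≤ #(T.biUnion fun t => E t ∩ A) :=
        card_le_card_biUnion ((hE.pairwiseDisjoint_s19 T).mono fun t => inter_subset_left)
          fun t ht => (mem_filter.1 ht).2
    _ ≤ #(A.filter fun a : ℕ+ => n < (a : ℕ)) := card_le_card hsub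
    _ ≤ n := hA

end TsAdmissible

theorem tnormAux_le_one {θ : ℝ} (hθ : 0 ≤ θ) {S : Set (Finset ℕ+)} {A : Finset ℕ+} {n : ℕ}
    (hθn : θ * n ≤ 1)
    (hA : ∀ (d : ℕ) (E : Fin d → Finset ℕ+), TsAdmissible S E → #{t | (E t ∩ A).Nonempty} ≤ n)
    (m : ℕ) {y : ℕ+ →₀ ℝ} (hyA : y.support ⊆ A) (hy : ∀ a, |y a| ≤ 1) :
    tnormAux θ S m y ≤ 1 := by
  induction m generalizing y with
  | zero => exact ciSup_le hy
  | succ m ih =>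
    refine max_le (ih hyA hy) (Real.sSup_le ?_ zero_le_one)
    rintro r ⟨d, E, hE, rfl⟩
    have hterm : ∀ t, tnormAux θ S m (tsProj (E t) y) ≤
        if (E t ∩ A).Nonempty then 1 else 0 := by
      intro t
      split_ifs with ht
      · exact ih ((support_tsProj_subset _ _).trans hyA)
          fun a => (abs_tsProj_apply_le _ _ a).trans (hy a)
      · rw [not_nonempty_iff_eq_empty, ← disjoint_iff_inter_eq_empty] at ht
        rw [tsProj_eq_zero_of_disjoint (ht.mono_right hyA), tnormAux_zero_right]
    calc θ * ∑ t, tnormAux θ S m (tsProj (E t) y)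
        ≤ θ * #{t | (E t ∩ A).Nonempty} := by
          gcongr
          exact (sum_le_sum fun t _ => hterm t).trans_eq (by rw [sum_boole])
      _ ≤ θ * n := by gcongr; exact_mod_cast hA d E hE
      _ ≤ 1 := hθn

theorem tnorm_eq_one {θ : ℝ} (hθ : 0 ≤ θ) {S : Set (Finset ℕ+)} {A : Finset ℕ+} {n : ℕ}
    (hθn : θ * n ≤ 1)
    (hA : ∀ (d : ℕ) (E : Fin d → Finset ℕ+), TsAdmissible S E → #{t | (E t ∩ A).Nonempty} ≤ n)
    {x : ℕ+ →₀ ℝ} (hxA : x.support ⊆ A) (hx : ∀ a, |x a| ≤ 1) {i : ℕ+} (hxi : |x i| = 1) :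
    tnorm θ S x = 1 := by
  have hbound m : tnormAux θ S m x ≤ 1 := tnormAux_le_one hθ hθn hA m hxA hx
  refine le_antisymm (ciSup_le hbound) ?_
  calc 1 = |x i| := hxi.symm
    _ ≤ tnormAux θ S 0 x := le_ciSup ⟨1, Set.forall_mem_range.2 hx⟩ i
    _ ≤ tnorm θ S x := le_ciSup ⟨1, Set.forall_mem_range.2 hbound⟩ 0

theorem tnorm_unit_minus_sum_general
    (θ : ℝ) (hθ0 : 0 < θ)
    (i : ℕ+) (hi : (i : ℕ) ≤ ⌈θ⁻¹⌉₊ - 1)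
    (j : Fin (⌈θ⁻¹⌉₊ - 1) → ℕ+) (hmono : StrictMono j)
    (hj : ∀ k, ⌈θ⁻¹⌉₊ < ((j k : ℕ+) : ℕ)) :
    tnorm θ (Schreier 1)
      (Finsupp.single i 1 - ∑ k, Finsupp.single (j k) (1 : ℝ)) = 1 := by
  have hi_range : i ∉ Set.range j := fun ⟨k, hk⟩ => by
    have := hk ▸ hj k
    omega
  have hθN : θ * (⌈θ⁻¹⌉₊ - 1 : ℕ) ≤ 1 := by
    have hN : 1 ≤ ⌈θ⁻¹⌉₊ := Nat.one_le_ceil_iff.2 (inv_pos.2 hθ0)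
    have : ((⌈θ⁻¹⌉₊ - 1 : ℕ) : ℝ) < θ⁻¹ := Nat.lt_ceil.1 (by omega)
    rw [← mul_inv_cancel₀ hθ0.ne']
    gcongr
  have hcount :
      #((insert i (univ.image j)).filter fun a : ℕ+ => ⌈θ⁻¹⌉₊ - 1 < (a : ℕ)) ≤ ⌈θ⁻¹⌉₊ - 1 := by
    refine (card_le_card (t := univ.image j) fun a ha => ?_).trans
      (card_image_le.trans_eq (card_fin _))
    obtain ⟨ha, hlt⟩ := mem_filter.1 ha
    rcases mem_insert.1 ha with rfl | ha
    · omega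
    · exact ha
  refine tnorm_eq_one hθ0.le hθN (fun d E hE => hE.card_filter_inter_nonempty_le hcount)
    (Finsupp.support_single_sub_sum_single_subset i j 1 1)
    (Finsupp.abs_single_sub_sum_single_apply_le_one hmono.injective hi_range) (i := i) ?_
  rw [Finsupp.sub_apply, Finsupp.sum_single_apply_of_notMem_range hi_range]
  simp

/-- If `θ⁻¹` is not an integer, `1 ≤ i ≤ ⌈θ⁻¹⌉ − 1` and
`⌈θ⁻¹⌉ < j₁ < ⋯ < j_{⌈θ⁻¹⌉−1}`, then `‖eᵢ − ∑ₖ e_{j_k}‖_{θ,S₁} = 1`. -/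
theorem tnorm_unit_minus_sum
    (θ : ℝ) (hθ0 : 0 < θ) (hθ : θ ≤ 1 / 2)
    (hni : ∀ k : ℕ, θ⁻¹ ≠ (k : ℝ))
    (i : ℕ+) (hi : (i : ℕ) ≤ ⌈θ⁻¹⌉₊ - 1)
    (j : Fin (⌈θ⁻¹⌉₊ - 1) → ℕ+) (hmono : StrictMono j)
    (hj : ∀ k, ⌈θ⁻¹⌉₊ < ((j k : ℕ+) : ℕ)) :
    tnorm θ (Schreier 1)
      (Finsupp.single i 1 - ∑ k, Finsupp.single (j k) (1 : ℝ)) = 1 :=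
  tnorm_unit_minus_sum_general θ hθ0 i hi j hmono hj
end
end
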